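/- Let λ be a positive root and s ∈ B with λ ≠ α_s and ⟨λ, α_s⟩ > 0. Then ρ(s) λ is a positive root and δ(ρ(s) λ) < δ(λ). -/

import Mathlib

/-!
Write `λ = ρ(q) α_i` and let `t = q s_i q⁻¹`, so that `ρ(t) v = v - 2⟨v, λ⟩ λ`. By faithfulness
`t` depends only on `λ`, and if `ρ(w⁻¹) λ < 0` then some prefix of a reduced word of `w` carries a
simple root to `λ`, so `ℓ(t w) < ℓ(w)`. Together with the oddness of `ℓ(t)` this gives
`2 δ(λ) = ℓ(t) + 1`. The reflection of `ρ(s) λ` is `s t s`, and `⟨λ, α_s⟩ > 0` makes `s` a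
descent of `t` on both sides, whence `ℓ(s t s) = ℓ(t) - 2` and `δ(ρ(s) λ) = δ(λ) - 1`.

Underneath lies the classical fact that `ρ(w) α_i ≥ 0` whenever `ℓ(w s_i) > ℓ(w)`. Pick a right
descent `s_t` of `w` and factor `w = v u` with `u` an alternating word in `s_i, s_t`, lengths
adding up, and `v` of minimal length, so that `s_i, s_t` are ascents of `v`. By induction
`ρ(v) α_i, ρ(v) α_t ≥ 0`, and in rank two `ρ(u) α_i` has coefficients
`U_k(cos (π / m)) = sin ((k + 1) π / m) / sin (π / m) ≥ 0`, as `u s_i` is reduced, so `k < m`.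
-/

open Real

variable {B : Type*}

/-- The pairing constant `⟨α_s, α_t⟩` of the standard bilinear form:
`-cos (π / M s t)` if `M s t ≠ 0`, and `-1` if `M s t = 0` (i.e. `m_{s,t} = ∞`). -/
noncomputable def pairing (M : CoxeterMatrix B) (s t : B) : ℝ :=
  if M s t = 0 then -1 else -Real.cos (Real.pi / (M s t : ℝ))

/-- The standard symmetric bilinear form on `V = B → ℝ`. -/
noncomputable def form [Fintype B] (M : CoxeterMatrix B) (v w : B → ℝ) : ℝ :=
  ∑ s, ∑ t, v s * w t * pairing M s t

/-- The simple root `α_s`, i.e. the standard basis vector at `s`. -/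
noncomputable def sroot [DecidableEq B] (s : B) : B → ℝ := Pi.single s 1

/-- `λ` is a root: `λ = ρ(w) α_s` for some `w ∈ W`, `s ∈ B`. -/
def IsRoot [DecidableEq B] (M : CoxeterMatrix B)
    (ρ : M.Group →* Module.End ℝ (B → ℝ)) (lam : B → ℝ) : Prop :=
  ∃ (w : M.Group) (s : B), ρ w (sroot s) = lam

/-- `λ` is positive: all coordinates are nonnegative. -/
def IsPos (lam : B → ℝ) : Prop := ∀ s, 0 ≤ lam s

/-- `λ` is negative: all coordinates are nonpositive. -/
def IsNeg (lam : B → ℝ) : Prop := ∀ s, lam s ≤ 0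

/-- `λ` is a positive root. -/
def IsPosRoot [DecidableEq B] (M : CoxeterMatrix B)
    (ρ : M.Group →* Module.End ℝ (B → ℝ)) (lam : B → ℝ) : Prop :=
  IsRoot M ρ lam ∧ IsPos lam

/-- `λ` dominates `μ`: for every `w ∈ W`, if `ρ(w) μ` is positive then so is `ρ(w) λ`. -/
def Dominates (M : CoxeterMatrix B)
    (ρ : M.Group →* Module.End ℝ (B → ℝ)) (lam mu : B → ℝ) : Prop :=
  ∀ w : M.Group, IsPos (ρ w mu) → IsPos (ρ w lam)

/-- `λ` is a minimal root: a positive root dominating no positive root other than itself. -/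
def IsMinimal [DecidableEq B] (M : CoxeterMatrix B)
    (ρ : M.Group →* Module.End ℝ (B → ℝ)) (lam : B → ℝ) : Prop :=
  IsPosRoot M ρ lam ∧
    ∀ mu, IsPosRoot M ρ mu → Dominates M ρ lam mu → mu = lam

/-- The depth `δ(λ)` of a positive root:
the least Coxeter length of a `w ∈ W` with `ρ(w⁻¹) λ` negative. -/
noncomputable def depth (M : CoxeterMatrix B)
    (ρ : M.Group →* Module.End ℝ (B → ℝ)) (lam : B → ℝ) : ℕ :=
  sInf {n | ∃ w : M.Group, IsNeg (ρ w⁻¹ lam) ∧ M.toCoxeterSystem.length w = n}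

/-- The partial order `λ ⪯ μ` on positive roots:
`μ = ρ(w) λ` for some `w` with `δ(μ) = ℓ(w) + δ(λ)`. -/
def PLE (M : CoxeterMatrix B)
    (ρ : M.Group →* Module.End ℝ (B → ℝ)) (lam mu : B → ℝ) : Prop :=
  ∃ w : M.Group, mu = ρ w lam ∧
    depth M ρ mu = M.toCoxeterSystem.length w + depth M ρ lam

/-- The Coxeter graph of `M`: distinct `s`, `t` are adjacent iff `M s t ≥ 3` or `M s t = 0`. -/
def coxGraph (M : CoxeterMatrix B) : SimpleGraph B where
  Adj s t := s ≠ t ∧ (M s t = 0 ∨ 3 ≤ M s t)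
  symm := by
    constructor
    intro s t h
    beta_reduce at h ⊢
    exact ⟨h.1.symm, by rw [M.symmetric t s]; exact h.2⟩
  loopless := by constructor; intro s h; exact h.1 rfl

/-- The support of a vector `λ ∈ V`. -/
def supp (lam : B → ℝ) : Set B := {s | lam s ≠ 0}

open CoxeterSystem Polynomial.Chebyshev

theorem chebyshevU_eval_cos_nonneg {m : ℕ} (hm : 2 ≤ m) {k : ℤ} (hk : 0 ≤ k + 1)
    (hkm : k + 1 ≤ m) : 0 ≤ (U ℝ k).eval (Real.cos (π / m)) := by
  have hm' : (2 : ℝ) ≤ m := by exact_mod_cast hm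
  have hθ : 0 < π / m := by positivity
  have hsin : 0 < Real.sin (π / m) := Real.sin_pos_of_pos_of_lt_pi hθ
    (div_lt_self Real.pi_pos (by linarith))
  refine nonneg_of_mul_nonneg_left ?_ hsin
  rw [U_real_cos]
  apply Real.sin_nonneg_of_nonneg_of_le_pi
  · exact mul_nonneg (by exact_mod_cast hk) hθ.le
  · calc ((k : ℝ) + 1) * (π / m) ≤ m * (π / m) := by
          gcongr; exact_mod_cast hkm
      _ = π := by field_simp

variable {M : CoxeterMatrix B}

theorem pairing_symm (s t : B) : pairing M s t = pairing M t s := by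
  rw [pairing, pairing, M.symmetric]

theorem pairing_self (s : B) : pairing M s s = 1 := by
  simp [pairing]

theorem chebyshevU_eval_neg_pairing_nonneg {s t : B} (hst : s ≠ t) {k : ℤ} (hk : 0 ≤ k + 1)
    (hkm : M s t = 0 ∨ k + 1 ≤ M s t) : 0 ≤ (U ℝ k).eval (-pairing M s t) := by
  unfold pairing
  split_ifs with h0
  · rw [neg_neg, U_eval_one]; exact_mod_cast hk
  · rw [neg_neg]
    exact chebyshevU_eval_cos_nonneg (by have := M.off_diagonal s t hst; omega) hk
      (hkm.resolve_left h0)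

section Form

variable [Fintype B]

theorem form_symm (v w : B → ℝ) : form M v w = form M w v := by
  rw [form, form, Finset.sum_comm]
  simp only [pairing_symm (M := M), mul_comm (v _)]

theorem form_add_left (u v w : B → ℝ) : form M (u + v) w = form M u w + form M v w := by
  simp only [form, Pi.add_apply, add_mul, Finset.sum_add_distrib]

theorem form_smul_left (c : ℝ) (v w : B → ℝ) : form M (c • v) w = c * form M v w := by
  simp only [form, Pi.smul_apply, smul_eq_mul, Finset.mul_sum, mul_assoc]

theorem form_sub_left (u v w : B → ℝ) : form M (u - v) w = form M u w - form M v w := by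
  simp only [form, Pi.sub_apply, sub_mul, Finset.sum_sub_distrib]

theorem form_smul_right (c : ℝ) (v w : B → ℝ) : form M v (c • w) = c * form M v w := by
  rw [form_symm, form_smul_left, form_symm]

theorem form_sub_right (u v w : B → ℝ) : form M u (v - w) = form M u v - form M u w := by
  rw [form_symm, form_sub_left, form_symm v, form_symm w]

variable [DecidableEq B]

theorem form_sroot_sroot (s t : B) : form M (sroot s) (sroot t) = pairing M s t := by
  simp [form, sroot, Pi.single_apply]

end Form

namespace CoxeterMatrix

@[simp]
theorem simple_mul_simple_self (i : B) : M.simple i * M.simple i = 1 :=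
  M.toCoxeterSystem.simple_mul_simple_self i

@[simp]
theorem inv_simple (i : B) : (M.simple i)⁻¹ = M.simple i := M.toCoxeterSystem.inv_simple i

@[simp]
theorem simple_mul_simple_cancel_left {w : M.Group} (i : B) :
    M.simple i * (M.simple i * w) = w :=
  M.toCoxeterSystem.simple_mul_simple_cancel_left i

@[simp]
theorem simple_mul_simple_cancel_right {w : M.Group} (i : B) :
    w * M.simple i * M.simple i = w :=
  M.toCoxeterSystem.simple_mul_simple_cancel_right i

end CoxeterMatrix

section CoxeterSystem

variable {W : Type*} [Group W] (cs : CoxeterSystem M W)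

theorem CoxeterSystem.not_isReduced_append_singleton_singleton (τ : List B) (x : B) :
    ¬cs.IsReduced (τ ++ [x] ++ [x]) := by
  intro h
  have hprod : cs.wordProd (τ ++ [x] ++ [x]) = cs.wordProd τ := by
    simp only [wordProd_append, wordProd_singleton, mul_assoc, simple_mul_simple_self, mul_one]
  have := cs.length_wordProd_le τ
  rw [CoxeterSystem.IsReduced, hprod, List.length_append, List.length_append] at h
  simp only [List.length_singleton] at h
  omega

theorem CoxeterSystem.eq_alternatingWord_of_isReduced {x y : B} (σ : List B)
    (hσ : ∀ a ∈ σ, a = x ∨ a = y) (hred : cs.IsReduced (σ ++ [x])) :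
    σ = alternatingWord x y σ.length := by
  induction σ using List.reverseRecOn generalizing x y with
  | nil => rfl
  | append_singleton τ a ih =>
    obtain rfl | rfl := hσ a (by simp)
    · exact absurd hred (cs.not_isReduced_append_singleton_singleton τ a)
    · have hτ := ih (x := a) (y := x) (fun b hb => (hσ b (by simp [hb])).symm)
        (by simpa [List.take_append, List.take_of_length_le] using hred.take (τ.length + 1))
      rw [List.length_append, List.length_singleton, alternatingWord_succ, ← hτ,
        List.concat_eq_append]

theorem CoxeterSystem.exists_dihedral_factorization (w : W) (i t : B) :
    ∃ v σ, (∀ a ∈ σ, a = i ∨ a = t) ∧ w = v * cs.wordProd σ ∧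
      cs.length w = cs.length v + σ.length ∧
      cs.length v < cs.length (v * cs.simple i) ∧ cs.length v < cs.length (v * cs.simple t) := by
  let S : Set (W × List B) := {p | (∀ a ∈ p.2, a = i ∨ a = t) ∧ w = p.1 * cs.wordProd p.2 ∧
    cs.length w = cs.length p.1 + p.2.length}
  obtain ⟨⟨v, σ⟩, ⟨hσ, hw, hlen⟩, hmin⟩ :=
    (measure fun p : W × List B => cs.length p.1).wf.has_min S ⟨(w, []), by simp [S]⟩
  have ascent : ∀ r, (r = i ∨ r = t) → cs.length v < cs.length (v * cs.simple r) := by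
    intro r hr
    rcases cs.length_mul_simple v r with h | h
    · omega
    refine absurd ?_ (hmin (v * cs.simple r, r :: σ) ⟨?_, ?_, ?_⟩)
    · show cs.length (v * cs.simple r) < cs.length v; omega
    · simpa [or_imp, forall_and] using ⟨hr, hσ⟩
    · simp [wordProd_cons, mul_assoc, hw]
    · simp only [List.length_cons] at hlen ⊢; omega
  exact ⟨v, σ, hσ, hw, hlen, ascent i (.inl rfl), ascent t (.inr rfl)⟩

theorem CoxeterSystem.isReduced_append_singleton {v : W} {σ : List B} {i : B}
    (hlen : cs.length (v * cs.wordProd σ) = cs.length v + σ.length)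
    (h : cs.length (v * cs.wordProd σ) < cs.length (v * cs.wordProd σ * cs.simple i)) :
    cs.IsReduced (σ ++ [i]) := by
  have hle := cs.length_wordProd_le (σ ++ [i])
  have hge := cs.length_mul_le v (cs.wordProd (σ ++ [i]))
  rw [CoxeterSystem.IsReduced]
  simp only [wordProd_append, wordProd_singleton, List.length_append, List.length_singleton,
    ← mul_assoc] at hle hge ⊢
  omega

end CoxeterSystem

theorem depth_le {ρ : M.Group →* Module.End ℝ (B → ℝ)} {lam : B → ℝ} {w : M.Group}
    (h : IsNeg (ρ w⁻¹ lam)) : depth M ρ lam ≤ M.toCoxeterSystem.length w :=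
  Nat.sInf_le ⟨w, h, rfl⟩

theorem exists_isNeg_length_eq_depth {ρ : M.Group →* Module.End ℝ (B → ℝ)} {lam : B → ℝ}
    {w : M.Group} (h : IsNeg (ρ w⁻¹ lam)) :
    ∃ w', IsNeg (ρ w'⁻¹ lam) ∧ M.toCoxeterSystem.length w' = depth M ρ lam :=
  Nat.sInf_mem (s := {n | ∃ w, IsNeg (ρ w⁻¹ lam) ∧ M.toCoxeterSystem.length w = n}) ⟨_, w, h, rfl⟩

section StandardRep

variable [DecidableEq B]

theorem sroot_nonneg (s q : B) : 0 ≤ sroot s q := by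
  by_cases h : q = s <;> simp [sroot, h]

theorem IsRoot.apply {ρ : M.Group →* Module.End ℝ (B → ℝ)} {lam : B → ℝ} (h : IsRoot M ρ lam)
    (g : M.Group) : IsRoot M ρ (ρ g lam) := by
  obtain ⟨w, i, rfl⟩ := h
  exact ⟨g * w, i, by simp⟩

variable [Fintype B]

def IsStandardRep (M : CoxeterMatrix B) (ρ : M.Group →* Module.End ℝ (B → ℝ)) : Prop :=
  ∀ (s : B) (v : B → ℝ), ρ (M.simple s) v = v - (2 * form M v (sroot s)) • sroot s

namespace IsStandardRep

variable {ρ : M.Group →* Module.End ℝ (B → ℝ)} (hρ : IsStandardRep M ρ)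
include hρ

local prefix:100 "ℓ" => M.toCoxeterSystem.length

theorem apply_simple_sroot (s : B) : ρ (M.simple s) (sroot s) = -sroot s := by
  rw [hρ, form_sroot_sroot, pairing_self]
  module

theorem form_apply_simple (s : B) (v w : B → ℝ) :
    form M (ρ (M.simple s) v) (ρ (M.simple s) w) = form M v w := by
  rw [hρ, hρ]
  simp only [form_sub_left, form_sub_right, form_smul_left, form_smul_right, form_symm (sroot s),
    form_sroot_sroot, pairing_self]
  ring

theorem form_apply (g : M.Group) (v w : B → ℝ) : form M (ρ g v) (ρ g w) = form M v w := by
  induction g using M.toCoxeterSystem.simple_induction_left generalizing v w with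
  | one => simp
  | mul_simple_left g i ih =>
    rw [CoxeterMatrix.toCoxeterSystem_simple, map_mul, Module.End.mul_apply, Module.End.mul_apply,
      hρ.form_apply_simple, ih]

theorem form_self_of_isRoot {lam : B → ℝ} (h : IsRoot M ρ lam) : form M lam lam = 1 := by
  obtain ⟨w, i, rfl⟩ := h
  rw [hρ.form_apply, form_sroot_sroot, pairing_self]

theorem ne_zero_of_isRoot {lam : B → ℝ} (h : IsRoot M ρ lam) : lam ≠ 0 := by
  rintro rfl
  simpa [form] using hρ.form_self_of_isRoot h

theorem apply_simple_smul_add_smul (p z : B) (c d : ℝ) :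
    ρ (M.simple z) (c • sroot p + d • sroot z) =
      c • sroot p + (2 * -pairing M p z * c - d) • sroot z := by
  rw [hρ]
  simp only [form_add_left, form_smul_left, form_sroot_sroot, pairing_self]
  module

theorem apply_wordProd_alternatingWord_sroot (s t : B) (n : ℕ) :
    ρ (M.toCoxeterSystem.wordProd (alternatingWord s t n)) (sroot s) =
      if Even n then
        (U ℝ n).eval (-pairing M s t) • sroot s + (U ℝ (n - 1 : ℤ)).eval (-pairing M s t) • sroot t
      else
        (U ℝ (n - 1 : ℤ)).eval (-pairing M s t) • sroot s + (U ℝ n).eval (-pairing M s t) • sroot t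
      := by
  induction n with
  | zero => simp [alternatingWord]
  | succ n ih =>
    have hU : (U ℝ ((n : ℤ) + 1)).eval (-pairing M s t) =
        2 * -pairing M s t * (U ℝ n).eval (-pairing M s t) -
          (U ℝ (n - 1 : ℤ)).eval (-pairing M s t) := by
      simp [U_add_one]
    rw [alternatingWord_succ', wordProd_cons, map_mul, Module.End.mul_apply, ih,
      CoxeterMatrix.toCoxeterSystem_simple]
    by_cases hn : Even n
    · simp only [hn, if_true, Nat.even_add_one, not_true, if_false, Nat.cast_add_one,
        add_sub_cancel_right, hρ.apply_simple_smul_add_smul, hU]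
    · simp only [hn, if_false, Nat.even_add_one, not_false_eq_true, if_true, Nat.cast_add_one,
        add_sub_cancel_right]
      rw [add_comm, hρ.apply_simple_smul_add_smul, pairing_symm t s, hU, add_comm]

theorem exists_nonneg_of_isReduced_alternatingWord {s t : B} (hst : s ≠ t) {n : ℕ}
    (hred : M.toCoxeterSystem.IsReduced (alternatingWord t s (n + 1))) :
    ∃ x y : ℝ, 0 ≤ x ∧ 0 ≤ y ∧
      ρ (M.toCoxeterSystem.wordProd (alternatingWord s t n)) (sroot s) =
        x • sroot s + y • sroot t := by
  have hbound : M s t = 0 ∨ (n : ℤ) + 1 ≤ M s t := by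
    by_contra! h
    rw [M.symmetric] at h
    exact M.toCoxeterSystem.not_isReduced_alternatingWord t s h.1 (by omega) hred
  have hnonneg : ∀ k : ℤ, k ≤ n → 0 ≤ k + 1 → 0 ≤ (U ℝ k).eval (-pairing M s t) :=
    fun k hk hk' => chebyshevU_eval_neg_pairing_nonneg hst hk' (hbound.imp_right (by omega))
  rw [hρ.apply_wordProd_alternatingWord_sroot]
  split_ifs
  · exact ⟨_, _, hnonneg _ le_rfl (by omega), hnonneg _ (by omega) (by omega), rfl⟩
  · exact ⟨_, _, hnonneg _ (by omega) (by omega), hnonneg _ le_rfl (by omega), rfl⟩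

theorem isPos_apply_sroot_of_length_lt {w : M.Group} {i : B}
    (h : ℓ w < ℓ (w * M.simple i)) : IsPos (ρ w (sroot i)) := by
  induction hk : ℓ w using Nat.strong_induction_on generalizing w i with
  | _ k ih =>
  obtain rfl | hw := eq_or_ne w 1
  · simpa [IsPos] using sroot_nonneg i
  obtain ⟨t, ht⟩ := M.toCoxeterSystem.exists_rightDescent_of_ne_one hw
  rw [IsRightDescent, CoxeterMatrix.toCoxeterSystem_simple] at ht
  have hit : i ≠ t := by rintro rfl; omega
  obtain ⟨v, σ, hσ, rfl, hlen, hvi, hvt⟩ := M.toCoxeterSystem.exists_dihedral_factorization w i t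
  rw [CoxeterMatrix.toCoxeterSystem_simple] at hvi hvt
  have hvw : ℓ v < k := by
    rcases σ with _ | ⟨a, σ⟩
    · simp only [wordProd_nil, mul_one] at ht; omega
    · simp only [List.length_cons] at hlen; omega
  have hred := M.toCoxeterSystem.isReduced_append_singleton hlen h
  have hσ_alt := M.toCoxeterSystem.eq_alternatingWord_of_isReduced σ hσ hred
  rw [hσ_alt, ← List.concat_eq_append, ← alternatingWord_succ] at hred
  obtain ⟨x, y, hx, hy, hxy⟩ := hρ.exists_nonneg_of_isReduced_alternatingWord hit hred
  have hvi' := ih _ hvw hvi rfl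
  have hvt' := ih _ hvw hvt rfl
  rw [map_mul, Module.End.mul_apply, hσ_alt, hxy, map_add, map_smul, map_smul]
  exact fun q => by simpa using add_nonneg (mul_nonneg hx (hvi' q)) (mul_nonneg hy (hvt' q))

theorem isNeg_apply_sroot_of_length_lt {w : M.Group} {i : B} (h : ℓ (w * M.simple i) < ℓ w) :
    IsNeg (ρ w (sroot i)) := by
  have hw : w * M.simple i * M.simple i = w := M.simple_mul_simple_cancel_right i
  have hpos := hρ.isPos_apply_sroot_of_length_lt (w := w * M.simple i) (i := i) (by rwa [hw])
  intro q
  rw [← hw, map_mul, Module.End.mul_apply, hρ.apply_simple_sroot, map_neg]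
  simpa using hpos q

theorem length_mul_simple_add_one_of_not_isPos {w : M.Group} {i : B}
    (h : ¬IsPos (ρ w (sroot i))) : ℓ (w * M.simple i) + 1 = ℓ w := by
  rcases M.toCoxeterSystem.length_mul_simple w i with h' | h'
  · exact absurd (hρ.isPos_apply_sroot_of_length_lt (by simp at h'; omega)) h
  · simpa using h'

theorem isPos_or_isNeg_of_isRoot {lam : B → ℝ} (h : IsRoot M ρ lam) : IsPos lam ∨ IsNeg lam := by
  obtain ⟨w, i, rfl⟩ := h
  by_cases hpos : IsPos (ρ w (sroot i))
  · exact .inl hpos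
  · have := hρ.length_mul_simple_add_one_of_not_isPos hpos
    exact .inr (hρ.isNeg_apply_sroot_of_length_lt (by omega))

theorem not_isNeg_of_isPosRoot {lam : B → ℝ} (h : IsPosRoot M ρ lam) : ¬IsNeg lam :=
  fun hneg => hρ.ne_zero_of_isRoot h.1 (funext fun q => le_antisymm (hneg q) (h.2 q))

theorem injective : Function.Injective ρ := by
  refine (injective_iff_map_eq_one ρ).mpr fun u hu => ?_
  by_contra hu1
  obtain ⟨i, hi⟩ := M.toCoxeterSystem.exists_rightDescent_of_ne_one hu1
  have hneg := hρ.isNeg_apply_sroot_of_length_lt hi i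
  simp [hu, sroot] at hneg
  linarith

theorem eq_sroot_of_isPosRoot {lam : B → ℝ} (h : IsPosRoot M ρ lam) {s : B}
    (hzero : ∀ q ≠ s, lam q = 0) : lam = sroot s := by
  have hlam : lam = lam s • sroot s := by
    ext q
    by_cases hq : q = s
    · simp [hq, sroot]
    · simp [hq, sroot, hzero q hq]
  have hnorm := hρ.form_self_of_isRoot h.1
  rw [hlam, form_smul_left, form_smul_right, form_sroot_sroot, pairing_self] at hnorm
  have hs : lam s = 1 := by nlinarith [h.2 s]
  rw [hlam, hs, one_smul]

theorem isPos_apply_simple {lam : B → ℝ} (h : IsPosRoot M ρ lam) {s : B} (hne : lam ≠ sroot s) :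
    IsPos (ρ (M.simple s) lam) := by
  refine (hρ.isPos_or_isNeg_of_isRoot (h.1.apply _)).resolve_right fun hneg => hne ?_
  refine hρ.eq_sroot_of_isPosRoot h fun q hq => le_antisymm ?_ (h.2 q)
  simpa [hρ s, sroot, hq] using hneg q

theorem apply_conj_simple (q : M.Group) (i : B) (v : B → ℝ) :
    ρ (q * M.simple i * q⁻¹) v = v - (2 * form M v (ρ q (sroot i))) • ρ q (sroot i) := by
  have hq : ρ q (ρ q⁻¹ v) = v := by simp [← Module.End.mul_apply, ← map_mul]
  rw [map_mul, map_mul, Module.End.mul_apply, Module.End.mul_apply, hρ, map_sub, map_smul, hq,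
    ← hρ.form_apply q, hq]

theorem conj_simple_eq_of_apply_sroot_eq {q q' : M.Group} {i j : B}
    (h : ρ q (sroot i) = ρ q' (sroot j)) : q * M.simple i * q⁻¹ = q' * M.simple j * q'⁻¹ :=
  hρ.injective <| LinearMap.ext fun v => by rw [hρ.apply_conj_simple, hρ.apply_conj_simple, h]

theorem exists_eq_append_cons_of_isNeg (ω : List B) {lam : B → ℝ} (h : IsPosRoot M ρ lam)
    (hneg : IsNeg (ρ (M.toCoxeterSystem.wordProd ω)⁻¹ lam)) :
    ∃ pre j post, ω = pre ++ j :: post ∧ ρ (M.toCoxeterSystem.wordProd pre) (sroot j) = lam := by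
  induction ω generalizing lam with
  | nil => exact absurd (by simpa using hneg) (hρ.not_isNeg_of_isPosRoot h)
  | cons i ω ih =>
    by_cases hi : lam = sroot i
    · exact ⟨[], i, ω, rfl, by simp [hi]⟩
    have hneg' : IsNeg (ρ (M.toCoxeterSystem.wordProd ω)⁻¹ (ρ (M.simple i) lam)) := by
      simpa [wordProd_cons, ← Module.End.mul_apply, ← map_mul] using hneg
    obtain ⟨pre, j, post, rfl, hpre⟩ :=
      ih ⟨h.1.apply _, hρ.isPos_apply_simple h hi⟩ hneg'
    refine ⟨i :: pre, j, post, rfl, ?_⟩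
    rw [wordProd_cons, CoxeterMatrix.toCoxeterSystem_simple, map_mul, Module.End.mul_apply, hpre,
      ← Module.End.mul_apply, ← map_mul, M.simple_mul_simple_self, map_one, Module.End.one_apply]

theorem length_conj_simple_mul_lt {q w : M.Group} {i : B} (hpos : IsPos (ρ q (sroot i)))
    (hneg : IsNeg (ρ w⁻¹ (ρ q (sroot i)))) : ℓ (q * M.simple i * q⁻¹ * w) < ℓ w := by
  obtain ⟨ω, hω, rfl⟩ := M.toCoxeterSystem.exists_isReduced w
  obtain ⟨pre, j, post, rfl, hpre⟩ :=
    hρ.exists_eq_append_cons_of_isNeg ω ⟨⟨q, i, rfl⟩, hpos⟩ hneg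
  rw [hρ.conj_simple_eq_of_apply_sroot_eq hpre.symm, hω.eq]
  have hprod : M.toCoxeterSystem.wordProd pre * M.simple j *
      (M.toCoxeterSystem.wordProd pre)⁻¹ * M.toCoxeterSystem.wordProd (pre ++ j :: post) =
        M.toCoxeterSystem.wordProd (pre ++ post) := by
    simp [wordProd_append, wordProd_cons, mul_assoc]
  rw [hprod]
  calc ℓ (M.toCoxeterSystem.wordProd (pre ++ post)) ≤ (pre ++ post).length :=
        M.toCoxeterSystem.length_wordProd_le _
    _ < (pre ++ j :: post).length := by simp

theorem apply_conj_simple_apply_sroot (q : M.Group) (i : B) :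
    ρ (q * M.simple i * q⁻¹) (ρ q (sroot i)) = -ρ q (sroot i) := by
  rw [← Module.End.mul_apply, ← map_mul, inv_mul_cancel_right, map_mul, Module.End.mul_apply,
    hρ.apply_simple_sroot, map_neg]

theorem two_mul_depth {q : M.Group} {i : B} (hpos : IsPos (ρ q (sroot i))) :
    2 * depth M ρ (ρ q (sroot i)) = ℓ (q * M.simple i * q⁻¹) + 1 := by
  set t := q * M.simple i * q⁻¹
  have ht : M.toCoxeterSystem.IsReflection t := ⟨q, i, rfl⟩
  obtain ⟨k, hk⟩ := ht.odd_length
  obtain ⟨τ, hτ, hτt⟩ := M.toCoxeterSystem.exists_isReduced t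
  set u := M.toCoxeterSystem.wordProd (τ.take k)
  set v := M.toCoxeterSystem.wordProd (τ.drop k)
  have htuv : t = u * v := by rw [hτt, ← wordProd_append, List.take_append_drop]
  have hu : ℓ u ≤ k := (M.toCoxeterSystem.length_wordProd_le _).trans (by simp)
  have hv : ℓ v = k + 1 := by
    rw [(hτ.drop k).eq, List.length_drop, ← hτ.eq, ← hτt, hk]
    omega
  -- otherwise `λ` would be negative under `u⁻¹ = v t`, so `t u = v⁻¹` would be shorter than `u`
  have hneg : IsNeg (ρ v⁻¹⁻¹ (ρ q (sroot i))) := by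
    rw [inv_inv]
    refine (hρ.isPos_or_isNeg_of_isRoot (IsRoot.apply ⟨q, i, rfl⟩ v)).resolve_left fun hpos' => ?_
    have hu_eq : u = t * v⁻¹ := by rw [htuv, mul_inv_cancel_right]
    have hneg' : IsNeg (ρ u⁻¹ (ρ q (sroot i))) := by
      rw [hu_eq, mul_inv_rev, inv_inv, ht.inv, map_mul, Module.End.mul_apply,
        hρ.apply_conj_simple_apply_sroot, map_neg]
      exact fun r => neg_nonpos.mpr (hpos' r)
    have htu : t * u = v⁻¹ := by rw [hu_eq, ← mul_assoc, ht.mul_self, one_mul]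
    have := hρ.length_conj_simple_mul_lt hpos hneg'
    rw [htu, M.toCoxeterSystem.length_inv] at this
    omega
  obtain ⟨w, hw, hwd⟩ := exists_isNeg_length_eq_depth hneg
  have h1 : ℓ (t * w) < ℓ w := hρ.length_conj_simple_mul_lt hpos hw
  have h2 := M.toCoxeterSystem.length_le_length_mul_add_right t w
  have h3 := depth_le hneg
  rw [M.toCoxeterSystem.length_inv] at h3
  omega

theorem length_simple_mul_conj_mul_simple {q : M.Group} {i s : B}
    (hpos : IsPos (ρ q (sroot i))) (hne : ρ q (sroot i) ≠ sroot s)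
    (hdot : 0 < form M (ρ q (sroot i)) (sroot s)) :
    ℓ (M.simple s * (q * M.simple i * q⁻¹) * M.simple s) + 2 = ℓ (q * M.simple i * q⁻¹) := by
  set lam := ρ q (sroot i)
  set t := q * M.simple i * q⁻¹
  have hroot : IsPosRoot M ρ lam := ⟨⟨q, i, rfl⟩, hpos⟩
  have hts : ρ t (sroot s) = sroot s - (2 * form M lam (sroot s)) • lam := by
    rw [hρ.apply_conj_simple, form_symm]
  -- `ρ t α_s = α_s - 2cλ` is negative at any `r ≠ s` in the support of `λ`
  have h1 : ℓ (t * M.simple s) + 1 = ℓ t := hρ.length_mul_simple_add_one_of_not_isPos fun hP => by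
    refine hne (hρ.eq_sroot_of_isPosRoot hroot fun r hr => ?_)
    have := hP r
    rw [hts] at this
    simp only [Pi.sub_apply, Pi.smul_apply, smul_eq_mul, show sroot s r = 0 by simp [sroot, hr]]
      at this
    nlinarith [hpos r]
  -- `ρ (s t) α_s = -α_s - 2c ρ(s)λ` is negative at `s`
  have h2 : ℓ (M.simple s * t * M.simple s) + 1 = ℓ (M.simple s * t) :=
    hρ.length_mul_simple_add_one_of_not_isPos fun hP => by
      have hs := hP s
      rw [map_mul, Module.End.mul_apply, hts, map_sub, map_smul, hρ.apply_simple_sroot] at hs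
      simp only [Pi.sub_apply, Pi.neg_apply, Pi.smul_apply, smul_eq_mul,
        show sroot s s = 1 by simp [sroot]] at hs
      nlinarith [hρ.isPos_apply_simple hroot hne s]
  have h3 : ℓ (M.simple s * t) = ℓ (t * M.simple s) := by
    rw [← M.toCoxeterSystem.length_inv, mul_inv_rev, M.inv_simple,
      (show M.toCoxeterSystem.IsReflection t from ⟨q, i, rfl⟩).inv]
  omega

end IsStandardRep

end StandardRep

theorem statement6 [DecidableEq B] [Fintype B] (M : CoxeterMatrix B)
    (ρ : M.Group →* Module.End ℝ (B → ℝ))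
    (hρ : ∀ (s : B) (v : B → ℝ),
      ρ (M.simple s) v = v - (2 * form M v (sroot s)) • sroot s)
    (lam : B → ℝ) (hlam : IsPosRoot M ρ lam) (s : B) (hne : lam ≠ sroot s)
    (hdot : 0 < form M lam (sroot s)) :
    IsPosRoot M ρ (ρ (M.simple s) lam) ∧
      depth M ρ (ρ (M.simple s) lam) < depth M ρ lam := by
  have hρ : IsStandardRep M ρ := hρ
  obtain ⟨⟨q, i, rfl⟩, hpos⟩ := hlam
  have hpos' := hρ.isPos_apply_simple ⟨⟨q, i, rfl⟩, hpos⟩ hne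
  refine ⟨⟨IsRoot.apply ⟨q, i, rfl⟩ _, hpos'⟩, ?_⟩
  rw [← Module.End.mul_apply, ← map_mul] at hpos' ⊢
  have hconj : M.simple s * q * M.simple i * (M.simple s * q)⁻¹ =
      M.simple s * (q * M.simple i * q⁻¹) * M.simple s := by
    simp [mul_assoc]
  have h1 := hρ.two_mul_depth hpos
  have h2 := hρ.two_mul_depth hpos'
  have h3 := hρ.length_simple_mul_conj_mul_simple hpos hne hdot
  rw [hconj] at h2
  omega
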